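/- Let γ ∈ (0, 1) and let λ_0,…,λ_{N−1} be a nonnegative adapted integrable price process. For a dissipative storage device of capacity b ≥ 0 with dynamics z_{k+1} = γ·z_k + u_k, call a plan admissible if z_0 = 0, each u_k is F_k-measurable, and 0 ≤ z_k ≤ b almost surely; its expected revenue is E[−Σ_{k=0}^{N−1} λ_k u_k]. Then the supremum of expected revenue over admissible plans equals b · Σ_{k=0}^{N−2} E[( γ·E[λ_{k+1} | F_k] − λ_k )^+]. (Remark 2 on dissipative storage.) -/

import Mathlib

/-!
Summation by parts, using `u k = z (k+1) - γ z k` and `z 0 = 0`, writes the revenue of a plan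
as `∑_{k<N-1} E[(γ λ_{k+1} - λ_k) z_{k+1}] - E[λ_{N-1} z_N]`. Since `z_{k+1}` is
`F_k`-measurable, `λ_{k+1}` may be replaced by `E[λ_{k+1} | F_k]` in the `k`-th term, which is
then at most `b · E[(γ E[λ_{k+1} | F_k] - λ_k)⁺]` because `0 ≤ z_{k+1} ≤ b`; the last term is
nonpositive. The bang-bang plan that fills the device exactly when `γ E[λ_{k+1} | F_k] > λ_k`,
and ends empty, attains all these bounds.
-/

open MeasureTheory

/-- State of charge of a dissipative storage device with dissipation rate `γ`:
`z 0 = 0`, `z (k+1) = γ·z k + u k`. -/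
def dissState (γ : ℝ) (u : ℕ → ℝ) : ℕ → ℝ
  | 0 => 0
  | k + 1 => γ * dissState γ u k + u k

open Finset

theorem neg_sum_mul_eq_sum_mul_dissState (γ : ℝ) (lam u : ℕ → ℝ) (n : ℕ) :
    -∑ k ∈ range (n + 1), lam k * u k
      = ∑ k ∈ range n, (γ * lam (k + 1) - lam k) * dissState γ u (k + 1)
        - lam n * dissState γ u (n + 1) := by
  induction n with
  | zero => simp [dissState]
  | succ n ih =>
    rw [sum_range_succ (fun k => lam k * u k), neg_add, ih, sum_range_succ]
    simp only [dissState]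
    ring

theorem dissState_sub_mul (γ : ℝ) {z : ℕ → ℝ} (hz : z 0 = 0) :
    dissState γ (fun k => z (k + 1) - γ * z k) = z := by
  funext k
  induction k with
  | zero => exact hz.symm
  | succ k ih => simp only [dissState, ih]; ring

theorem stronglyMeasurable_dissState {Ω : Type*} {m : MeasurableSpace Ω} (γ : ℝ)
    {u : ℕ → Ω → ℝ} {n : ℕ} (hu : ∀ j, j < n → StronglyMeasurable[m] (u j)) :
    StronglyMeasurable[m] (fun ω => dissState γ (fun j => u j ω) n) := by
  induction n with
  | zero => exact stronglyMeasurable_const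
  | succ n ih =>
    exact ((ih fun j hj => hu j (by omega)).const_mul γ).add (hu n n.lt_succ_self)

theorem mul_le_mul_max_zero {x z b : ℝ} (hz : 0 ≤ z) (hzb : z ≤ b) : x * z ≤ b * max x 0 :=
  calc x * z ≤ max x 0 * z := mul_le_mul_of_nonneg_right (le_max_left x 0) hz
    _ ≤ max x 0 * b := mul_le_mul_of_nonneg_left hzb (le_max_right x 0)
    _ = b * max x 0 := mul_comm _ _

theorem integral_mul_eq_integral_condExp_mul {Ω : Type*} {m m0 : MeasurableSpace Ω}
    {μ : Measure Ω} (hm : m ≤ m0) [SigmaFinite (μ.trim hm)] {f g : Ω → ℝ} {C : ℝ}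
    (hf : Integrable f μ) (hg : StronglyMeasurable[m] g)
    (hgC : ∀ᵐ ω ∂μ, ‖g ω‖ ≤ C) :
    ∫ ω, f ω * g ω ∂μ = ∫ ω, (μ[f|m]) ω * g ω ∂μ := by
  have hfg : Integrable (f * g) μ := hf.mul_bdd (hg.mono hm).aestronglyMeasurable hgC
  calc ∫ ω, f ω * g ω ∂μ = ∫ ω, (μ[f * g|m]) ω ∂μ := (integral_condExp hm).symm
    _ = ∫ ω, (μ[f|m]) ω * g ω ∂μ :=
      integral_congr_ae (condExp_mul_of_stronglyMeasurable_right hg hfg hf)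

section Storage

variable {Ω : Type*} [m0 : MeasurableSpace Ω] (μ : Measure Ω) (F : Filtration ℕ m0) (γ : ℝ)
  (lam : ℕ → Ω → ℝ)

noncomputable def condSpread (k : ℕ) (ω : Ω) : ℝ := γ * (μ[lam (k + 1)|F k]) ω - lam k ω

def IsAdmissiblePlan (b : ℝ) (N : ℕ) (u : ℕ → Ω → ℝ) : Prop :=
  (∀ k, k < N → StronglyMeasurable[F k] (u k)) ∧
  ∀ k, k ≤ N → ∀ᵐ ω ∂μ,
    0 ≤ dissState γ (fun j => u j ω) k ∧ dissState γ (fun j => u j ω) k ≤ b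

noncomputable def expectedRevenue (N : ℕ) (u : ℕ → Ω → ℝ) : ℝ :=
  ∫ ω, -∑ k ∈ range N, lam k ω * u k ω ∂μ

variable {μ F γ lam}

theorem condSpread_ae_eq_condExp [IsFiniteMeasure μ] {k : ℕ}
    (hk : StronglyMeasurable[F k] (lam k)) (hik : Integrable (lam k) μ)
    (hik1 : Integrable (lam (k + 1)) μ) :
    μ[fun ω => γ * lam (k + 1) ω - lam k ω|F k] =ᵐ[μ] condSpread μ F γ lam k := by
  change μ[γ • lam (k + 1) - lam k|F k] =ᵐ[μ] _
  filter_upwards [condExp_sub (hik1.smul γ) hik (F k),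
    condExp_smul (μ := μ) γ (lam (k + 1)) (F k)] with ω hsub hsmul
  rw [hsub, Pi.sub_apply, hsmul, condExp_of_stronglyMeasurable (F.le k) hk hik]
  rfl

theorem integral_sub_mul_eq_integral_condSpread_mul [IsFiniteMeasure μ] {k : ℕ} {g : Ω → ℝ}
    {C : ℝ} (hk : StronglyMeasurable[F k] (lam k)) (hik : Integrable (lam k) μ)
    (hik1 : Integrable (lam (k + 1)) μ) (hg : StronglyMeasurable[F k] g)
    (hgC : ∀ᵐ ω ∂μ, ‖g ω‖ ≤ C) :
    ∫ ω, (γ * lam (k + 1) ω - lam k ω) * g ω ∂μ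
      = ∫ ω, condSpread μ F γ lam k ω * g ω ∂μ := by
  have hD : Integrable (fun ω => γ * lam (k + 1) ω - lam k ω) μ := (hik1.const_mul γ).sub hik
  rw [integral_mul_eq_integral_condExp_mul (F.le k) hD hg hgC]
  refine integral_congr_ae ?_
  filter_upwards [condSpread_ae_eq_condExp hk hik hik1] with ω hω
  rw [hω]

theorem integrable_condSpread {k : ℕ} (hik : Integrable (lam k) μ) :
    Integrable (condSpread μ F γ lam k) μ :=
  (integrable_condExp.const_mul γ).sub hik

theorem stronglyMeasurable_condSpread {k : ℕ} (hk : StronglyMeasurable[F k] (lam k)) :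
    StronglyMeasurable[F k] (condSpread μ F γ lam k) :=
  (stronglyMeasurable_condExp.const_mul γ).sub hk

variable {b : ℝ} {N n : ℕ} {u : ℕ → Ω → ℝ}

namespace IsAdmissiblePlan

theorem stronglyMeasurable_state (hu : IsAdmissiblePlan μ F γ b N u) {k : ℕ} (hk : k < N) :
    StronglyMeasurable[F k] (fun ω => dissState γ (fun j => u j ω) (k + 1)) :=
  stronglyMeasurable_dissState γ fun j hj => (hu.1 j (by omega)).mono (F.mono (by omega))

theorem norm_state_le (hu : IsAdmissiblePlan μ F γ b N u) {k : ℕ} (hk : k ≤ N) :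
    ∀ᵐ ω ∂μ, ‖dissState γ (fun j => u j ω) k‖ ≤ b := by
  filter_upwards [hu.2 k hk] with ω hω
  exact abs_le.2 ⟨by linarith [hω.1], hω.2⟩

theorem expectedRevenue_eq [IsFiniteMeasure μ] (hu : IsAdmissiblePlan μ F γ b (n + 1) u)
    (hadapt : ∀ k, k < n + 1 → StronglyMeasurable[F k] (lam k))
    (hint : ∀ k, k < n + 1 → Integrable (lam k) μ) :
    expectedRevenue μ lam (n + 1) u
      = ∑ k ∈ range n,
          ∫ ω, condSpread μ F γ lam k ω * dissState γ (fun j => u j ω) (k + 1) ∂μ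
        - ∫ ω, lam n ω * dissState γ (fun j => u j ω) (n + 1) ∂μ := by
  have hmul_state : ∀ f : Ω → ℝ, Integrable f μ → ∀ k, k ≤ n →
      Integrable (fun ω => f ω * dissState γ (fun j => u j ω) (k + 1)) μ := fun f hf k hk =>
    hf.mul_bdd ((hu.stronglyMeasurable_state (by omega)).mono (F.le k)).aestronglyMeasurable
      (hu.norm_state_le (by omega))
  have hterm : ∀ k ∈ range n, Integrable
      (fun ω => (γ * lam (k + 1) ω - lam k ω) * dissState γ (fun j => u j ω) (k + 1)) μ := by
    intro k hk
    have hk : k < n := mem_range.1 hk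
    exact hmul_state _ (((hint (k + 1) (by omega)).const_mul γ).sub (hint k (by omega))) k hk.le
  have habel : (fun ω => -∑ k ∈ range (n + 1), lam k ω * u k ω)
      = fun ω => ∑ k ∈ range n,
          (γ * lam (k + 1) ω - lam k ω) * dissState γ (fun j => u j ω) (k + 1)
        - lam n ω * dissState γ (fun j => u j ω) (n + 1) :=
    funext fun ω => neg_sum_mul_eq_sum_mul_dissState γ (fun j => lam j ω) (fun j => u j ω) n
  rw [expectedRevenue, habel, integral_sub (integrable_finsetSum _ hterm)
    (hmul_state _ (hint n n.lt_succ_self) n le_rfl), integral_finsetSum _ hterm]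
  congr 1
  refine sum_congr rfl fun k hk => ?_
  have hk : k < n := mem_range.1 hk
  exact integral_sub_mul_eq_integral_condSpread_mul (hadapt k (by omega)) (hint k (by omega))
    (hint (k + 1) (by omega)) (hu.stronglyMeasurable_state (by omega))
    (hu.norm_state_le (by omega))

theorem expectedRevenue_le [IsFiniteMeasure μ] (hu : IsAdmissiblePlan μ F γ b (n + 1) u)
    (hadapt : ∀ k, k < n + 1 → StronglyMeasurable[F k] (lam k))
    (hint : ∀ k, k < n + 1 → Integrable (lam k) μ) (hpos : ∀ᵐ ω ∂μ, 0 ≤ lam n ω) :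
    expectedRevenue μ lam (n + 1) u
      ≤ b * ∑ k ∈ range n, ∫ ω, max (condSpread μ F γ lam k ω) 0 ∂μ := by
  have hterm : ∀ k ∈ range n,
      ∫ ω, condSpread μ F γ lam k ω * dissState γ (fun j => u j ω) (k + 1) ∂μ
        ≤ b * ∫ ω, max (condSpread μ F γ lam k ω) 0 ∂μ := by
    intro k hk
    have hk : k < n := mem_range.1 hk
    have hX := integrable_condSpread (F := F) (γ := γ) (hint k (by omega))
    rw [← integral_const_mul]
    refine integral_mono_ae (hX.mul_bdd ((hu.stronglyMeasurable_state (by omega)).mono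
      (F.le k)).aestronglyMeasurable (hu.norm_state_le (by omega))) (hX.pos_part.const_mul b) ?_
    filter_upwards [hu.2 (k + 1) (by omega)] with ω hω
    exact mul_le_mul_max_zero hω.1 hω.2
  have hlast : 0 ≤ ∫ ω, lam n ω * dissState γ (fun j => u j ω) (n + 1) ∂μ := by
    refine integral_nonneg_of_ae ?_
    filter_upwards [hpos, hu.2 (n + 1) le_rfl] with ω hlam hstate
    exact mul_nonneg hlam hstate.1
  rw [hu.expectedRevenue_eq hadapt hint, mul_sum]
  linarith [sum_le_sum hterm]

end IsAdmissiblePlan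

variable (μ F γ lam b n)

noncomputable def greedyState : ℕ → Ω → ℝ
  | 0, _ => 0
  | k + 1, ω => if k < n ∧ 0 < condSpread μ F γ lam k ω then b else 0

noncomputable def greedyPlan (k : ℕ) (ω : Ω) : ℝ :=
  greedyState μ F γ lam b n (k + 1) ω - γ * greedyState μ F γ lam b n k ω

variable {μ F γ lam b n}

theorem dissState_greedyPlan (ω : Ω) (k : ℕ) :
    dissState γ (fun j => greedyPlan μ F γ lam b n j ω) k = greedyState μ F γ lam b n k ω :=
  congrFun (dissState_sub_mul γ (z := fun k => greedyState μ F γ lam b n k ω) rfl) k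

theorem greedyState_nonneg_and_le (hb : 0 ≤ b) (k : ℕ) (ω : Ω) :
    0 ≤ greedyState μ F γ lam b n k ω ∧ greedyState μ F γ lam b n k ω ≤ b := by
  cases k with
  | zero => exact ⟨le_rfl, hb⟩
  | succ k =>
    simp only [greedyState]
    split_ifs
    · exact ⟨hb, le_rfl⟩
    · exact ⟨le_rfl, hb⟩

theorem stronglyMeasurable_greedyState_succ
    (hadapt : ∀ k, k < n → StronglyMeasurable[F k] (lam k)) (k : ℕ) :
    StronglyMeasurable[F k] (greedyState μ F γ lam b n (k + 1)) := by
  change StronglyMeasurable[F k]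
    fun ω => if k < n ∧ 0 < condSpread μ F γ lam k ω then b else 0
  by_cases hk : k < n
  · have hprofit : MeasurableSet[F k] {ω | 0 < condSpread μ F γ lam k ω} :=
      measurableSet_lt measurable_const (stronglyMeasurable_condSpread (hadapt k hk)).measurable
    simp only [hk, true_and]
    exact (Measurable.ite hprofit measurable_const measurable_const).stronglyMeasurable
  · simp only [hk, false_and, if_false]
    exact stronglyMeasurable_const

theorem stronglyMeasurable_greedyState
    (hadapt : ∀ k, k < n → StronglyMeasurable[F k] (lam k)) (k : ℕ) :
    StronglyMeasurable[F k] (greedyState μ F γ lam b n k) := by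
  cases k with
  | zero => exact stronglyMeasurable_const
  | succ k => exact (stronglyMeasurable_greedyState_succ hadapt k).mono (F.mono k.le_succ)

theorem isAdmissiblePlan_greedyPlan (hb : 0 ≤ b)
    (hadapt : ∀ k, k < n → StronglyMeasurable[F k] (lam k)) :
    IsAdmissiblePlan μ F γ b N (greedyPlan μ F γ lam b n) := by
  refine ⟨fun k _ => (stronglyMeasurable_greedyState_succ hadapt k).sub
    ((stronglyMeasurable_greedyState hadapt k).const_mul γ), fun k _ => ?_⟩
  refine Filter.Eventually.of_forall fun ω => ?_
  rw [dissState_greedyPlan]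
  exact greedyState_nonneg_and_le hb k ω

theorem expectedRevenue_greedyPlan [IsFiniteMeasure μ] (hb : 0 ≤ b)
    (hadapt : ∀ k, k < n + 1 → StronglyMeasurable[F k] (lam k))
    (hint : ∀ k, k < n + 1 → Integrable (lam k) μ) :
    expectedRevenue μ lam (n + 1) (greedyPlan μ F γ lam b n)
      = b * ∑ k ∈ range n, ∫ ω, max (condSpread μ F γ lam k ω) 0 ∂μ := by
  have hu : IsAdmissiblePlan μ F γ b (n + 1) (greedyPlan μ F γ lam b n) :=
    isAdmissiblePlan_greedyPlan hb fun k hk => hadapt k (by omega)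
  rw [hu.expectedRevenue_eq hadapt hint, mul_sum]
  simp only [dissState_greedyPlan, greedyState, lt_irrefl, false_and, if_false, mul_zero,
    integral_zero, sub_zero]
  refine sum_congr rfl fun k hk => ?_
  rw [← integral_const_mul]
  congr 1
  funext ω
  simp only [mem_range.1 hk, true_and]
  split_ifs with hprofit
  · rw [max_eq_left hprofit.le, mul_comm]
  · rw [max_eq_right (not_lt.1 hprofit), mul_zero, mul_zero]

end Storage

theorem dissipative_arbitrage_value_general {Ω : Type*} [m0 : MeasurableSpace Ω]
    (μ : Measure Ω) [IsProbabilityMeasure μ]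
    (N : ℕ) (F : Filtration ℕ m0)
    (γ : ℝ)
    (lam : ℕ → Ω → ℝ)
    (hadapt : ∀ k, k < N → StronglyMeasurable[F k] (lam k))
    (hint : ∀ k, k < N → Integrable (lam k) μ)
    (hpos : ∀ k, k < N → ∀ᵐ ω ∂μ, 0 ≤ lam k ω)
    (b : ℝ) (hb : 0 ≤ b) :
    sSup { r : ℝ | ∃ u : ℕ → Ω → ℝ,
        (∀ k, k < N → StronglyMeasurable[F k] (u k)) ∧
        (∀ k, k ≤ N → ∀ᵐ ω ∂μ,
          0 ≤ dissState γ (fun j => u j ω) k ∧ dissState γ (fun j => u j ω) k ≤ b) ∧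
        r = ∫ ω, -∑ k ∈ Finset.range N, lam k ω * u k ω ∂μ }
      = b * ∑ k ∈ Finset.range (N - 1),
          ∫ ω, max (γ * (μ[lam (k + 1)|F k]) ω - lam k ω) 0 ∂μ := by
  rcases N with _ | n
  · have hu : IsAdmissiblePlan μ F γ b 0 (greedyPlan μ F γ lam b 0) :=
      isAdmissiblePlan_greedyPlan hb fun k hk => absurd hk k.not_lt_zero
    refine IsGreatest.csSup_eq ⟨⟨_, hu.1, hu.2, by simp⟩, ?_⟩
    rintro r ⟨u, -, -, rfl⟩
    simp
  · have hu : IsAdmissiblePlan μ F γ b (n + 1) (greedyPlan μ F γ lam b n) :=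
      isAdmissiblePlan_greedyPlan hb fun k hk => hadapt k (by omega)
    refine IsGreatest.csSup_eq ⟨⟨greedyPlan μ F γ lam b n, hu.1, hu.2,
      (expectedRevenue_greedyPlan hb hadapt hint).symm⟩, ?_⟩
    rintro r ⟨u, hmeas, hstate, rfl⟩
    exact IsAdmissiblePlan.expectedRevenue_le ⟨hmeas, hstate⟩ hadapt hint
      (hpos n n.lt_succ_self)

/-- Dissipative storage (Remark 2).  For `γ ∈ (0,1)`, a nonnegative adapted
integrable price process, and capacity `b ≥ 0`, the supremum of the expected revenue
`E[−∑_{k<N} λ_k u_k]` over all admissible causal plans (`u k` being `F k`-measurable and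
`0 ≤ z k ≤ b` a.s., where `z 0 = 0` and `z (k+1) = γ z k + u k`) equals
`b · ∑_{k=0}^{N−2} E[(γ·E[λ_{k+1} | F_k] − λ_k)⁺]`. -/
theorem dissipative_arbitrage_value {Ω : Type*} [m0 : MeasurableSpace Ω]
    (μ : Measure Ω) [IsProbabilityMeasure μ]
    (N : ℕ) (F : Filtration ℕ m0)
    (γ : ℝ) (hγ0 : 0 < γ) (hγ1 : γ < 1)
    (lam : ℕ → Ω → ℝ)
    (hadapt : ∀ k, k < N → StronglyMeasurable[F k] (lam k))
    (hint : ∀ k, k < N → Integrable (lam k) μ)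
    (hpos : ∀ k, k < N → ∀ᵐ ω ∂μ, 0 ≤ lam k ω)
    (b : ℝ) (hb : 0 ≤ b) :
    sSup { r : ℝ | ∃ u : ℕ → Ω → ℝ,
        (∀ k, k < N → StronglyMeasurable[F k] (u k)) ∧
        (∀ k, k ≤ N → ∀ᵐ ω ∂μ,
          0 ≤ dissState γ (fun j => u j ω) k ∧ dissState γ (fun j => u j ω) k ≤ b) ∧
        r = ∫ ω, -∑ k ∈ Finset.range N, lam k ω * u k ω ∂μ }
      = b * ∑ k ∈ Finset.range (N - 1),
          ∫ ω, max (γ * (μ[lam (k + 1)|F k]) ω - lam k ω) 0 ∂μ :=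
  dissipative_arbitrage_value_general (m0 := m0) μ N F γ lam hadapt hint hpos b hb
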